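/- Let n ≥ 2, a > 0, set λ = (π − 2)/(a(π − 4)), and let c be the uniform-node matrix c_{ij} = 1/(n−1) for i ≠ j and c_{ii} = 0. Suppose real numbers ρ¹,…,ρⁿ, q¹,…,qⁿ, γ¹,…,γⁿ satisfy, for every i, both coupling equations: qⁱ − γⁱ + (2a/√(2π))·ρⁱ = −∑_{j=1}^n c_{ij} (qʲ + γʲ − (2a/√(2π))·ρʲ) and ρⁱ + (λ + √(2π)/(a(π−4)))·γⁱ + (2/(√(2π)a))·qⁱ = ∑_{j=1}^n c_{ij} (ρʲ + (−λ + √(2π)/(a(π−4)))·γʲ − (2/(√(2π)a))·qʲ). Then ∑_{i=1}^n qⁱ = 0, ∑_{i=1}^n γⁱ = 0, and for all i, j one has ρⁱ + κ·qⁱ = ρʲ + κ·qʲ, where κ = ((n−2)/n)·(1/a)·(4 + ((n−2)/n)·√(2π))/(√(2π) + 2(n−2)/n). -/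

import Mathlib

/-!
Write `A = 2a/√(2π)`, `B = 2/(√(2π) a)`, `t = (n-2)/n` and `ρ̄` for the mean of the `ρⁱ`.
The uniform node matrix has unit column sums, so summing a coupling equation over the edges
balances edge sums: the first equation gives `∑ qⁱ = 0`, and then the second gives `∑ γⁱ = 0`
since `λ ≠ 0`. With these, each equation at a uniform node reduces to a relation on a single
edge, `γⁱ = t qⁱ + A (ρⁱ - ρ̄)` and `ρⁱ - ρ̄ + ν γⁱ + t B qⁱ = 0` with `ν = t λ + √(2π)/(a(π-4))`.
Eliminating `γⁱ` gives `ρⁱ + t (ν + B)/(1 + A ν) qⁱ = ρ̄`, and for the Gaussian constants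
both `ν + B` and `1 + A ν` carry the factor `π - 2`, whose cancellation leaves `κ`.
-/

section CouplingMatrix

variable {ι : Type*} [Fintype ι]

theorem sum_sum_mul_eq_sum_of_sum_col_eq_one {c : ι → ι → ℝ} (hcol : ∀ j, ∑ i, c i j = 1)
    (y : ι → ℝ) : ∑ i, ∑ j, c i j * y j = ∑ j, y j := by
  rw [Finset.sum_comm]
  simp only [← Finset.sum_mul, hcol, one_mul]

theorem sum_ite_eq_zero_mul [DecidableEq ι] (r : ℝ) (y : ι → ℝ) (i : ι) :
    ∑ j, (if i = j then 0 else r) * y j = r * (∑ j, y j - y i) := by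
  have hsplit : ∀ j, (if i = j then 0 else r) * y j = r * y j - if i = j then r * y j else 0 := by
    intro j
    split_ifs <;> ring
  simp only [hsplit, Finset.sum_sub_distrib, Finset.sum_ite_eq, Finset.mem_univ, if_true]
  rw [mul_sub, Finset.mul_sum]

end CouplingMatrix

section UniformNode

variable {n : ℕ} {c : Fin n → Fin n → ℝ}

theorem uniformNode_sum_mul (hn : 2 ≤ n)
    (hc : ∀ i j, c i j = if i = j then 0 else 1 / ((n : ℝ) - 1)) (y : Fin n → ℝ) (i : Fin n) :
    ((n : ℝ) - 1) * ∑ j, c i j * y j = ∑ j, y j - y i := by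
  have hn1 : (n : ℝ) - 1 ≠ 0 := by rw [sub_ne_zero, Nat.cast_ne_one]; omega
  simp only [hc, sum_ite_eq_zero_mul]
  field_simp

theorem uniformNode_sum_col (hn : 2 ≤ n)
    (hc : ∀ i j, c i j = if i = j then 0 else 1 / ((n : ℝ) - 1)) (j : Fin n) :
    ∑ i, c i j = 1 := by
  have hn1 : (n : ℝ) - 1 ≠ 0 := by rw [sub_ne_zero, Nat.cast_ne_one]; omega
  have hsymm : ∀ i, c i j = c j i * 1 := fun i => by simp only [hc, eq_comm (a := i), mul_one]
  have hrow := uniformNode_sum_mul hn hc (fun _ => 1) j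
  simp only [← hsymm, Finset.sum_const, Finset.card_univ, Fintype.card_fin, nsmul_eq_mul,
    mul_one] at hrow
  exact (mul_right_inj' hn1).mp (by linarith)

end UniformNode

section CouplingEquations

variable {A B lam μ : ℝ}

theorem sum_eq_zero_of_coupling {ι : Type*} [Fintype ι] {c : ι → ι → ℝ}
    (hcol : ∀ j, ∑ i, c i j = 1) (hlam : lam ≠ 0) {ρ q γ : ι → ℝ}
    (h1 : ∀ i, q i - γ i + A * ρ i = -∑ j, c i j * (q j + γ j - A * ρ j))
    (h2 : ∀ i, ρ i + (lam + μ) * γ i + B * q i =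
      ∑ j, c i j * (ρ j + (-lam + μ) * γ j - B * q j)) :
    ∑ i, q i = 0 ∧ ∑ i, γ i = 0 := by
  have hsum1 : ∑ i, (q i - γ i + A * ρ i) = -∑ i, (q i + γ i - A * ρ i) := by
    rw [Finset.sum_congr rfl fun i _ => h1 i, Finset.sum_neg_distrib,
      sum_sum_mul_eq_sum_of_sum_col_eq_one hcol]
  have hsum2 : ∑ i, (ρ i + (lam + μ) * γ i + B * q i) =
      ∑ i, (ρ i + (-lam + μ) * γ i - B * q i) := by
    rw [Finset.sum_congr rfl fun i _ => h2 i, sum_sum_mul_eq_sum_of_sum_col_eq_one hcol]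
  simp only [Finset.sum_add_distrib, Finset.sum_sub_distrib, ← Finset.mul_sum] at hsum1 hsum2
  have hq : ∑ i, q i = 0 := by linarith
  have hγ : 2 * lam * ∑ i, γ i = 0 := by linear_combination hsum2 - 2 * B * hq
  exact ⟨hq, by simpa [hlam] using hγ⟩

variable {n : ℕ} {c : Fin n → Fin n → ℝ} {ρ q γ : Fin n → ℝ}

theorem layer_eq_of_coupling_uniformNode (hn : 2 ≤ n)
    (hc : ∀ i j, c i j = if i = j then 0 else 1 / ((n : ℝ) - 1))
    (h1 : ∀ i, q i - γ i + A * ρ i = -∑ j, c i j * (q j + γ j - A * ρ j))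
    (hq : ∑ i, q i = 0) (hγ : ∑ i, γ i = 0) (i : Fin n) :
    γ i = ((n : ℝ) - 2) / n * q i + A * (ρ i - (∑ j, ρ j) / n) := by
  have hn0 : (n : ℝ) ≠ 0 := by positivity
  have hrow := uniformNode_sum_mul hn hc (fun j => q j + γ j - A * ρ j) i
  simp only [Finset.sum_add_distrib, Finset.sum_sub_distrib, ← Finset.mul_sum, hq, hγ] at hrow
  field_simp
  linear_combination hrow - ((n : ℝ) - 1) * h1 i

theorem mass_eq_of_coupling_uniformNode (hn : 2 ≤ n)
    (hc : ∀ i j, c i j = if i = j then 0 else 1 / ((n : ℝ) - 1))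
    (h2 : ∀ i, ρ i + (lam + μ) * γ i + B * q i =
      ∑ j, c i j * (ρ j + (-lam + μ) * γ j - B * q j))
    (hq : ∑ i, q i = 0) (hγ : ∑ i, γ i = 0) (i : Fin n) :
    ρ i - (∑ j, ρ j) / n + (((n : ℝ) - 2) / n * lam + μ) * γ i +
      ((n : ℝ) - 2) / n * B * q i = 0 := by
  have hn0 : (n : ℝ) ≠ 0 := by positivity
  have hrow := uniformNode_sum_mul hn hc (fun j => ρ j + (-lam + μ) * γ j - B * q j) i
  simp only [Finset.sum_add_distrib, Finset.sum_sub_distrib, ← Finset.mul_sum, hq, hγ] at hrow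
  field_simp
  linear_combination ((n : ℝ) - 1) * h2 i + hrow

end CouplingEquations

theorem add_mul_eq_of_eliminate_layer {t A B ν ρ q γ m : ℝ} (hD : 1 + A * ν ≠ 0)
    (hlayer : γ = t * q + A * (ρ - m)) (hmass : ρ - m + ν * γ + t * B * q = 0) :
    ρ + t * (ν + B) / (1 + A * ν) * q = m := by
  have hsubst : (ρ - m) * (1 + A * ν) + t * (ν + B) * q = 0 := by
    linear_combination hmass - ν * hlayer
  rw [div_mul_eq_mul_div, add_div' _ _ _ hD, div_eq_iff hD]
  linear_combination hsubst

section GaussianConstants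

open Real

variable {a s t : ℝ}

theorem gaussian_lam_ne_zero (ha : a ≠ 0) : (π - 2) / (a * (π - 4)) ≠ 0 := by
  have hπ2 : π - 2 ≠ 0 := by linarith [pi_gt_three]
  have hπ4 : π - 4 ≠ 0 := by linarith [pi_lt_d2]
  positivity

theorem gaussian_one_add_mul_eq (ha : a ≠ 0) (hs : s ≠ 0) :
    1 + 2 * a / s * (t * ((π - 2) / (a * (π - 4))) + s / (a * (π - 4))) =
      (π - 2) * (s + 2 * t) / (s * (π - 4)) := by
  have hπ4 : π - 4 ≠ 0 := by linarith [pi_lt_d2]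
  field_simp
  ring

theorem gaussian_add_eq (ha : a ≠ 0) (hs : s ≠ 0) (hs2 : s ^ 2 = 2 * π) :
    t * ((π - 2) / (a * (π - 4))) + s / (a * (π - 4)) + 2 / (s * a) =
      (π - 2) * (s * t + 4) / (s * a * (π - 4)) := by
  have hπ4 : π - 4 ≠ 0 := by linarith [pi_lt_d2]
  field_simp
  linear_combination hs2

theorem gaussian_one_add_mul_ne_zero (ha : a ≠ 0) (hs : 0 < s) (ht : 0 ≤ t) :
    1 + 2 * a / s * (t * ((π - 2) / (a * (π - 4))) + s / (a * (π - 4))) ≠ 0 := by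
  have hπ2 : π - 2 ≠ 0 := by linarith [pi_gt_three]
  have hπ4 : π - 4 ≠ 0 := by linarith [pi_lt_d2]
  have hst : s + 2 * t ≠ 0 := by positivity
  rw [gaussian_one_add_mul_eq ha hs.ne']
  positivity

theorem gaussian_kappa_eq (ha : a ≠ 0) (hs : 0 < s) (hs2 : s ^ 2 = 2 * π) (ht : 0 ≤ t) :
    t * (t * ((π - 2) / (a * (π - 4))) + s / (a * (π - 4)) + 2 / (s * a)) /
        (1 + 2 * a / s * (t * ((π - 2) / (a * (π - 4))) + s / (a * (π - 4)))) =
      t * (1 / a) * (4 + t * s) / (s + 2 * t) := by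
  have hπ2 : π - 2 ≠ 0 := by linarith [pi_gt_three]
  have hπ4 : π - 4 ≠ 0 := by linarith [pi_lt_d2]
  have hst : s + 2 * t ≠ 0 := by positivity
  rw [gaussian_add_eq ha hs.ne' hs2, gaussian_one_add_mul_eq ha hs.ne']
  field_simp
  ring

end GaussianConstants

/-- Half-moment coupling at a uniform node for the Gaussian BGK model:
flux and layer-amplitude conservation and the coupling invariant ρ + κ·q. -/
theorem halfmoment_coupling_gaussian_invariant (n : ℕ) (hn : 2 ≤ n) (a : ℝ) (ha : 0 < a)
    (lam : ℝ) (hlam : lam = (Real.pi - 2) / (a * (Real.pi - 4)))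
    (c : Fin n → Fin n → ℝ)
    (hc : ∀ i j, c i j = if i = j then 0 else 1 / ((n : ℝ) - 1))
    (ρ q γ : Fin n → ℝ)
    (h1 : ∀ i, q i - γ i + (2 * a / Real.sqrt (2 * Real.pi)) * ρ i =
      -∑ j, c i j * (q j + γ j - (2 * a / Real.sqrt (2 * Real.pi)) * ρ j))
    (h2 : ∀ i, ρ i + (lam + Real.sqrt (2 * Real.pi) / (a * (Real.pi - 4))) * γ i +
        (2 / (Real.sqrt (2 * Real.pi) * a)) * q i =
      ∑ j, c i j * (ρ j + (-lam + Real.sqrt (2 * Real.pi) / (a * (Real.pi - 4))) * γ j -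
        (2 / (Real.sqrt (2 * Real.pi) * a)) * q j))
    (κ : ℝ)
    (hκ : κ = (((n : ℝ) - 2) / n) * (1 / a) *
      (4 + (((n : ℝ) - 2) / n) * Real.sqrt (2 * Real.pi)) /
        (Real.sqrt (2 * Real.pi) + 2 * (((n : ℝ) - 2) / n))) :
    (∑ i, q i = 0) ∧ (∑ i, γ i = 0) ∧
    ∀ i j, ρ i + κ * q i = ρ j + κ * q j := by
  subst hlam
  have hs : 0 < Real.sqrt (2 * Real.pi) := by positivity
  have hs2 : Real.sqrt (2 * Real.pi) ^ 2 = 2 * Real.pi := Real.sq_sqrt (by positivity)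
  have ht : 0 ≤ ((n : ℝ) - 2) / n := div_nonneg (by simpa using hn) (Nat.cast_nonneg n)
  obtain ⟨hq, hγ⟩ :=
    sum_eq_zero_of_coupling (uniformNode_sum_col hn hc) (gaussian_lam_ne_zero ha.ne') h1 h2
  have hmean : ∀ i, ρ i + κ * q i = (∑ j, ρ j) / n := by
    intro i
    have := add_mul_eq_of_eliminate_layer (gaussian_one_add_mul_ne_zero ha.ne' hs ht)
      (layer_eq_of_coupling_uniformNode hn hc h1 hq hγ i)
      (mass_eq_of_coupling_uniformNode hn hc h2 hq hγ i)
    rwa [gaussian_kappa_eq ha.ne' hs hs2 ht, ← hκ] at this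
  exact ⟨hq, hγ, fun i j => (hmean i).trans (hmean j).symm⟩
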